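/- Let S be a finite set, let p, q ∈ Σ_S, let α > 0, and let f : S → ℝ satisfy 0 ≤ f(s) ≤ b for all s ∈ S. If KL(p, q) ≤ α, then |pf − qf| ≤ √( 2 · Var_q(f) · α ) + (2/3) · b · α. -/

import Mathlib

/-!
For `λ ≥ 0`, the entropy duality `λ·pg − KL(p,q) ≤ q(e^{λg}) − 1` (pointwise `log y ≤ y − 1`)
combined with `eˣ ≤ 1 + x + x²/(2 − λb)` for `x ≤ λb < 2` gives, for `g` centred under `q` with
`g ≤ b`, the Chernoff bound `λ·pg ≤ α + λ² Var_q(g)/(2 − λb)`. Optimising over `λ` yields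
`pg ≤ √(2 Var_q(g) α) + bα/2`, and `g = ±(f − qf)` gives both sides of the claim.
-/

open Finset

/-- Kullback–Leibler divergence between two finitely supported distributions, with the
conventions `0 · log(0/x) = 0` and `KL(p,q) = +∞` when `p(s) > 0` while `q(s) = 0`. -/
noncomputable def KLdiv {S : Type*} [Fintype S] (p q : S → ℝ) : EReal :=
  ∑ s, if p s = 0 then (0 : EReal)
    else if q s = 0 then (⊤ : EReal)
    else ((p s * Real.log (p s / q s) : ℝ) : EReal)

open Real

lemma exp_le_one_add_add_sq_div_two_of_nonpos {x : ℝ} (hx : x ≤ 0) :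
    exp x ≤ 1 + x + x ^ 2 / 2 := by
  have hpos : 0 < 1 + -x + (-x) ^ 2 / 2 := by nlinarith
  -- `(1 - x + x²/2) (1 + x + x²/2) = 1 + x⁴/4`
  calc exp x = (exp (-x))⁻¹ := by rw [exp_neg, inv_inv]
    _ ≤ (1 + -x + (-x) ^ 2 / 2)⁻¹ :=
        inv_anti₀ hpos (quadratic_le_exp_of_nonneg (neg_nonneg.2 hx))
    _ ≤ 1 + x + x ^ 2 / 2 := by
        rw [inv_le_iff_one_le_mul₀' hpos]
        nlinarith [pow_nonneg (sq_nonneg x) 2]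

lemma exp_le_one_add_add_sq_div_two_sub {x u : ℝ} (hxu : x ≤ u) (hu : 0 ≤ u) (hu2 : u < 2) :
    exp x ≤ 1 + x + x ^ 2 / (2 - u) := by
  rcases le_or_gt x 0 with hx | hx
  · calc exp x ≤ 1 + x + x ^ 2 / 2 := exp_le_one_add_add_sq_div_two_of_nonpos hx
      _ ≤ 1 + x + x ^ 2 / (2 - u) := by gcongr; linarith
  · calc exp x ≤ (2 + x) / (2 - x) := exp_le_two_add_div_two_sub hx.le (by linarith)
      _ = 1 + x + x ^ 2 / (2 - x) := by
          have : 2 - x ≠ 0 := by linarith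
          field_simp
          ring
      _ ≤ 1 + x + x ^ 2 / (2 - u) := by gcongr

lemma mul_sub_mul_log_div_le {a c : ℝ} (ha : 0 ≤ a) (hc : 0 ≤ c) (hac : a ≠ 0 → c ≠ 0) (x : ℝ) :
    a * x - a * log (a / c) ≤ c * exp x - a := by
  rcases ha.eq_or_lt with rfl | ha
  · simpa using mul_nonneg hc (exp_pos x).le
  have hc : 0 < c := hc.lt_of_ne' (hac ha.ne')
  calc a * x - a * log (a / c) = a * log (c * exp x / a) := by
        rw [log_div (by positivity) ha.ne', log_mul hc.ne' (exp_pos x).ne', log_exp,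
          log_div ha.ne' hc.ne']
        ring
    _ ≤ a * (c * exp x / a - 1) := by gcongr; exact log_le_sub_one_of_pos (by positivity)
    _ = c * exp x - a := by field_simp

lemma le_sqrt_mul_add_of_forall_pos {m V α c : ℝ} (hV : 0 ≤ V) (hα : 0 < α)
    (h : ∀ t > 0, m ≤ α * t + V / (2 * t) + c) : m ≤ √(2 * V * α) + c := by
  rcases hV.eq_or_lt with rfl | hV
  · refine le_of_forall_pos_le_add fun ε hε => ?_
    simpa [mul_div_cancel₀ ε hα.ne', add_comm] using h (ε / α) (by positivity)
  set t := √(V / (2 * α))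
  have ht : 0 < t := sqrt_pos.2 (by positivity)
  have hV : V = 2 * α * t ^ 2 := by rw [sq_sqrt (by positivity)]; field_simp
  have hsqrt : √(2 * V * α) = 2 * α * t := by
    rw [hV, show 2 * (2 * α * t ^ 2) * α = (2 * α * t) ^ 2 by ring, sqrt_sq (by positivity)]
  calc m ≤ α * t + V / (2 * t) + c := h t ht
    _ = √(2 * V * α) + c := by rw [hsqrt, hV]; field_simp; ring

lemma EReal.coe_finset_sum {ι : Type*} (s : Finset ι) (f : ι → ℝ) :
    ((∑ i ∈ s, f i : ℝ) : EReal) = ∑ i ∈ s, (f i : EReal) :=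
  map_sum (⟨⟨Real.toEReal, EReal.coe_zero⟩, EReal.coe_add⟩ : ℝ →+ EReal) f s

section Distributions

variable {S : Type*} [Fintype S] {p q : S → ℝ}

lemma KLdiv_eq_top {s₀ : S} (hp : p s₀ ≠ 0) (hq : q s₀ = 0) : KLdiv p q = ⊤ := by
  classical
  have hne_bot : ∀ s ∈ univ.erase s₀, (if p s = 0 then (0 : EReal) else if q s = 0 then ⊤
      else ((p s * log (p s / q s) : ℝ) : EReal)) ≠ ⊥ := by
    intro s _
    split_ifs
    exacts [EReal.zero_ne_bot, top_ne_bot, EReal.coe_ne_bot _]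
  rw [KLdiv, ← add_sum_erase _ _ (mem_univ s₀), if_neg hp, if_pos hq]
  exact EReal.top_add_of_ne_bot
    (sum_induction _ (· ≠ ⊥) (fun _ _ ha hb => EReal.add_ne_bot_iff.2 ⟨ha, hb⟩) (by simp) hne_bot)

lemma KLdiv_eq_coe_sum (hpq : ∀ s, p s ≠ 0 → q s ≠ 0) :
    KLdiv p q = ((∑ s, p s * log (p s / q s) : ℝ) : EReal) := by
  rw [KLdiv, EReal.coe_finset_sum]
  refine sum_congr rfl fun s _ => ?_
  by_cases hp : p s = 0
  · simp [hp]
  · simp [hp, hpq s hp]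

lemma sum_mul_sub_const {f : S → ℝ} (hpsum : ∑ s, p s = 1) (c : ℝ) :
    ∑ s, p s * (f s - c) = ∑ s, p s * f s - c := by
  simp only [mul_sub, sum_sub_distrib, ← sum_mul, hpsum, one_mul]

lemma sum_mul_sub_sum_mul_log_div_le (hp : ∀ s, 0 ≤ p s) (hpsum : ∑ s, p s = 1)
    (hq : ∀ s, 0 ≤ q s) (hpq : ∀ s, p s ≠ 0 → q s ≠ 0) (h : S → ℝ) :
    ∑ s, p s * h s - ∑ s, p s * log (p s / q s) ≤ ∑ s, q s * exp (h s) - 1 := by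
  rw [← hpsum, ← sum_sub_distrib, ← sum_sub_distrib]
  exact sum_le_sum fun s _ => mul_sub_mul_log_div_le (hp s) (hq s) (hpq s) (h s)

lemma sum_mul_exp_le (hq : ∀ s, 0 ≤ q s) (hqsum : ∑ s, q s = 1) {g : S → ℝ}
    (hmean : ∑ s, q s * g s = 0) {b l : ℝ} (hb : 0 ≤ b) (hgb : ∀ s, g s ≤ b) (hl : 0 ≤ l)
    (hlb : l * b < 2) :
    ∑ s, q s * exp (l * g s) ≤ 1 + l ^ 2 * (∑ s, q s * g s ^ 2) / (2 - l * b) := by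
  calc ∑ s, q s * exp (l * g s)
      ≤ ∑ s, q s * (1 + l * g s + (l * g s) ^ 2 / (2 - l * b)) := by
        gcongr with s
        · exact hq s
        · exact exp_le_one_add_add_sq_div_two_sub (by gcongr; exact hgb s) (by positivity) hlb
    _ = ∑ s, q s + l * ∑ s, q s * g s + l ^ 2 / (2 - l * b) * ∑ s, q s * g s ^ 2 := by
        simp only [mul_sum, ← sum_add_distrib]
        refine sum_congr rfl fun s _ => ?_
        ring
    _ = 1 + l ^ 2 * (∑ s, q s * g s ^ 2) / (2 - l * b) := by rw [hqsum, hmean]; ring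

theorem sum_mul_le_sqrt_add_of_sum_mul_log_div_le (hp : ∀ s, 0 ≤ p s) (hpsum : ∑ s, p s = 1)
    (hq : ∀ s, 0 ≤ q s) (hqsum : ∑ s, q s = 1) (hpq : ∀ s, p s ≠ 0 → q s ≠ 0)
    {α : ℝ} (hα : 0 < α) (hKL : ∑ s, p s * log (p s / q s) ≤ α)
    {b : ℝ} (hb : 0 ≤ b) {g : S → ℝ} (hgb : ∀ s, g s ≤ b) (hmean : ∑ s, q s * g s = 0) :
    ∑ s, p s * g s ≤ √(2 * (∑ s, q s * g s ^ 2) * α) + b * α / 2 := by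
  set V := ∑ s, q s * g s ^ 2
  refine le_sqrt_mul_add_of_forall_pos (sum_nonneg fun s _ => by have := hq s; positivity) hα
    fun t ht => ?_
  -- with `λ = 2 / (2t + b)` the Chernoff bound `λ m ≤ α + λ² V / (2 - λ b)` reads
  -- `m ≤ α t + V / (2t) + b α / 2`
  set l := 2 / (2 * t + b)
  have hl : 0 < l := by positivity
  have hlb : l * b < 2 := by
    rw [div_mul_eq_mul_div, div_lt_iff₀ (by positivity)]
    linarith
  have hgibbs := sum_mul_sub_sum_mul_log_div_le hp hpsum hq hpq (fun s => l * g s)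
  have hmgf := sum_mul_exp_le hq hqsum hmean hb hgb hl.le hlb
  have hchernoff : l * ∑ s, p s * g s ≤ α + l ^ 2 * V / (2 - l * b) := by
    rw [mul_sum]
    simp only [mul_left_comm (p _) l] at hgibbs
    linarith
  have hden : 2 - l * b = 4 * t / (2 * t + b) := by
    simp only [l]
    field_simp
    ring
  have hrearrange : α * t + V / (2 * t) + b * α / 2 - ∑ s, p s * g s
      = (2 * t + b) / 2 * (α + l ^ 2 * V / (2 - l * b) - l * ∑ s, p s * g s) := by
    rw [hden]
    simp only [l]
    field_simp
    ring
  rw [← sub_nonneg, hrearrange]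
  exact mul_nonneg (by positivity) (sub_nonneg.2 hchernoff)

end Distributions

/-- Bernstein-type inequality via the KL divergence. If `KL(p,q) ≤ α` then
`|pf − qf| ≤ √(2 Var_q(f) α) + (2/3) b α` for any `f` with values in `[0,b]`. -/
theorem bernstein_via_kl {S : Type*} [Fintype S]
    (p q : S → ℝ) (hp : ∀ s, 0 ≤ p s) (hpsum : ∑ s, p s = 1)
    (hq : ∀ s, 0 ≤ q s) (hqsum : ∑ s, q s = 1)
    (α : ℝ) (hα : 0 < α)
    (b : ℝ) (f : S → ℝ) (hf : ∀ s, 0 ≤ f s ∧ f s ≤ b)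
    (hKL : KLdiv p q ≤ (α : EReal)) :
    |(∑ s, p s * f s) - ∑ s, q s * f s|
      ≤ Real.sqrt (2 * (∑ s, q s * (f s - ∑ s', q s' * f s') ^ 2) * α)
        + 2 / 3 * b * α := by
  have hpq : ∀ s, p s ≠ 0 → q s ≠ 0 := fun s hps hqs => by
    simp [KLdiv_eq_top hps hqs] at hKL
  have hKL' : ∑ s, p s * log (p s / q s) ≤ α := by
    rwa [KLdiv_eq_coe_sum hpq, EReal.coe_le_coe_iff] at hKL
  set T := ∑ s, q s * f s
  have hT0 : 0 ≤ T := sum_nonneg fun s _ => mul_nonneg (hq s) (hf s).1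
  have hTb : T ≤ b := by
    calc T ≤ ∑ s, q s * b := sum_le_sum fun s _ => mul_le_mul_of_nonneg_left (hf s).2 (hq s)
      _ = b := by rw [← sum_mul, hqsum, one_mul]
  have hb : 0 ≤ b := hT0.trans hTb
  have hcentered : ∑ s, q s * (f s - T) = 0 := by rw [sum_mul_sub_const hqsum, sub_self]
  have upper := sum_mul_le_sqrt_add_of_sum_mul_log_div_le hp hpsum hq hqsum hpq hα hKL' hb
    (g := fun s => f s - T) (fun s => by linarith [(hf s).2]) hcentered
  have lower := sum_mul_le_sqrt_add_of_sum_mul_log_div_le hp hpsum hq hqsum hpq hα hKL' hb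
    (g := fun s => -(f s - T)) (fun s => by linarith [(hf s).1])
    (by simp only [mul_neg, sum_neg_distrib, hcentered, neg_zero])
  simp only [mul_neg, sum_neg_distrib, neg_sq, sum_mul_sub_const hpsum] at upper lower
  rw [abs_sub_le_iff]
  constructor <;> linarith [mul_nonneg hb hα.le]
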